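/- arXiv:1901.09789 — 6 statements merged into one kernel-verified Lean document; each statement's English description precedes it below -/
import Mathlib

section
/- Let τ ≥ 2 and let Φ be the clock with parameter τ, i.e. the conjunctive network with firing memory on the complete graph K_{τ+1} with maximum delay dt_i = τ at every node. Let y be the configuration whose node i (for i = 0,1,…,τ) is, in delay notation, in state i (that is, node 0 is in the pair state (0,0) and node i ≥ 1 is in the pair state (1,i)). Then for every t ≥ 0 and every node i, the state of node i in Φ^t(y) is, in delay notation, (i − t) mod (τ+1). -/
open Classical in
/-- The conjunctive network on a finite simple graph `G`:
`F(x)_i = ⋀_{j adjacent to i} x_j`. -/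
noncomputable def conjNet {V : Type*} [Fintype V] (G : SimpleGraph V)
    (x : V → Bool) : V → Bool :=
  fun i => if ∀ j, G.Adj i j → x j = true then true else false

/-- One step of the conjunctive network with firing memory on `G` with
maximum delays `dt`.  A configuration assigns to each node a pair
`(xᵢ, Δᵢ)` of a Boolean state and a delay. -/
noncomputable def fmStep {V : Type*} [Fintype V] (G : SimpleGraph V) (dt : V → ℕ)
    (y : V → Bool × ℕ) : V → Bool × ℕ :=
  fun i =>
    let f := conjNet G (fun j => (y j).1) i
    let d : ℕ := if f = true then dt i else (y i).2 - 1
    (if 1 ≤ d then true else f, d)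

/-!
If every maximum delay is positive, configurations in delay notation stay in delay notation, and
the dynamics becomes a map on delay vectors: a node all of whose neighbours have nonzero delay is
reset to its maximum delay, every other node counts down. In the clock exactly one node has delay
`0` at each time; it is the only node that sees no zero, so it jumps to `τ ≡ -1 (mod τ + 1)`,
while all other nodes see it and count down. Hence the delay vector is `i ↦ (i - t) mod (τ + 1)`
at time `t`.
-/

open Function

def ofDelay (d : ℕ) : Bool × ℕ := (decide (d ≠ 0), d)

lemma ofDelay_eq_ite (d : ℕ) : ofDelay d = if d = 0 then (false, 0) else (true, d) := by
  by_cases hd : d = 0 <;> simp [ofDelay, hd]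

section FiringMemory

variable {V : Type*} [Fintype V] (G : SimpleGraph V) (dt : V → ℕ)

open Classical in
noncomputable def delayStep (δ : V → ℕ) : V → ℕ :=
  fun i => if ∀ j, G.Adj i j → δ j ≠ 0 then dt i else δ i - 1

open Classical in
lemma conjNet_ofDelay (δ : V → ℕ) (i : V) :
    conjNet G (fun j => (ofDelay (δ j)).1) i = decide (∀ j, G.Adj i j → δ j ≠ 0) := by
  simp [conjNet, ofDelay]

lemma fmStep_ofDelay (hdt : ∀ i, dt i ≠ 0) (δ : V → ℕ) :
    fmStep G dt (ofDelay ∘ δ) = ofDelay ∘ delayStep G dt δ := by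
  classical
  funext i
  simp only [fmStep, comp_apply, conjNet_ofDelay, delayStep]
  by_cases h : ∀ j, G.Adj i j → δ j ≠ 0
  · rw [decide_eq_true h, if_pos rfl, if_pos h]
    simp [ofDelay, Nat.one_le_iff_ne_zero, hdt i]
  · rw [decide_eq_false h, if_neg Bool.false_ne_true, if_neg h]
    simp [ofDelay, Nat.one_le_iff_ne_zero]

lemma iterate_fmStep_ofDelay (hdt : ∀ i, dt i ≠ 0) (t : ℕ) (δ : V → ℕ) :
    (fmStep G dt)^[t] (ofDelay ∘ δ) = ofDelay ∘ (delayStep G dt)^[t] δ :=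
  (Semiconj.iterate_right (f := (ofDelay ∘ ·))
    (fun δ => (fmStep_ofDelay G dt hdt δ).symm) t δ).symm

end FiringMemory

section Clock

variable {τ : ℕ}

def clockDelay (c : ZMod (τ + 1)) (i : Fin (τ + 1)) : ℕ := (((i : ℕ) : ZMod (τ + 1)) - c).val

lemma natCast_fin_injective (n : ℕ) : Injective (fun i : Fin n => ((i : ℕ) : ZMod n)) :=
  fun j k h => Fin.ext <| by
    simpa [ZMod.val_cast_of_lt j.isLt, ZMod.val_cast_of_lt k.isLt] using congrArg ZMod.val h

lemma clockDelay_eq_zero_iff {c : ZMod (τ + 1)} {i : Fin (τ + 1)} :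
    clockDelay c i = 0 ↔ ((i : ℕ) : ZMod (τ + 1)) = c := by
  rw [clockDelay, ZMod.val_eq_zero, sub_eq_zero]

lemma forall_ne_clockDelay_ne_zero_iff (c : ZMod (τ + 1)) (i : Fin (τ + 1)) :
    (∀ j, i ≠ j → clockDelay c j ≠ 0) ↔ clockDelay c i = 0 := by
  simp only [ne_eq, clockDelay_eq_zero_iff]
  constructor
  · intro h
    by_contra hi
    let j : Fin (τ + 1) := ⟨c.val, ZMod.val_lt c⟩
    have hj : ((j : ℕ) : ZMod (τ + 1)) = c := ZMod.natCast_zmod_val c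
    exact h j (by rintro rfl; exact hi hj) hj
  · rintro rfl j hij hj
    exact hij (natCast_fin_injective (τ + 1) hj.symm)

lemma delayStep_clockDelay (hτ : 1 ≤ τ) (c : ZMod (τ + 1)) :
    delayStep ⊤ (fun _ => τ) (clockDelay c) = clockDelay (c + 1) := by
  funext i
  simp only [delayStep, SimpleGraph.top_adj, forall_ne_clockDelay_ne_zero_iff]
  split_ifs with h
  · rw [clockDelay_eq_zero_iff] at h
    rw [clockDelay, h, sub_add_cancel_left, ZMod.val_neg_one]
  · have : Fact (1 < τ + 1) := ⟨by omega⟩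
    have h1 : (1 : ZMod (τ + 1)).val ≤ clockDelay c i := by
      rw [ZMod.val_one]; exact Nat.one_le_iff_ne_zero.2 h
    rw [clockDelay, clockDelay, sub_add_eq_sub_sub, ZMod.val_sub h1, ZMod.val_one]

lemma iterate_delayStep_clockDelay (hτ : 1 ≤ τ) (t : ℕ) :
    (delayStep ⊤ (fun _ => τ))^[t] (clockDelay (0 : ZMod (τ + 1))) =
      clockDelay (t : ZMod (τ + 1)) := by
  induction t with
  | zero => rfl
  | succ t ih => rw [iterate_succ_apply', ih, delayStep_clockDelay hτ, Nat.cast_succ]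

end Clock

/-- on the clock with parameter `τ` (complete graph `K_{τ+1}`,
maximum delay `τ` everywhere), starting from the configuration whose node `i`
is in delay-notation state `i`, after `t` steps node `i` is in delay-notation
state `(i - t) mod (τ + 1)`. -/
theorem clock_orbit (τ : ℕ) (hτ : 2 ≤ τ) (t : ℕ) (i : Fin (τ + 1)) :
    (fmStep (⊤ : SimpleGraph (Fin (τ + 1))) (fun _ => τ))^[t]
      (fun j : Fin (τ + 1) =>
        if (j : ℕ) = 0 then ((false, 0) : Bool × ℕ) else (true, (j : ℕ))) i =
    (if (((i : ℕ) : ZMod (τ + 1)) - ((t : ℕ) : ZMod (τ + 1))).val = 0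
      then ((false, 0) : Bool × ℕ)
      else (true, (((i : ℕ) : ZMod (τ + 1)) - ((t : ℕ) : ZMod (τ + 1))).val)) := by
  have hinit : (fun j : Fin (τ + 1) =>
      if (j : ℕ) = 0 then ((false, 0) : Bool × ℕ) else (true, (j : ℕ))) =
      ofDelay ∘ clockDelay 0 := by
    funext j
    simp [clockDelay, ZMod.val_cast_of_lt j.isLt, ofDelay_eq_ite]
  rw [hinit, iterate_fmStep_ofDelay _ _ (fun _ => by omega),
    iterate_delayStep_clockDelay (by omega)]
  exact ofDelay_eq_ite _
end

section
/- Let τ ≥ 2. The clock with parameter τ (the conjunctive network with firing memory on the complete graph K_{τ+1} with maximum delay dt_i = τ at every node) admits an attractor of period τ + 1: the configuration y whose node i is, in delay notation, in state i (node 0 in pair state (0,0), node i ≥ 1 in pair state (1,i)) is periodic under Φ with minimal period exactly τ + 1. -/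
open Function

theorem Function.Semiconj.minimalPeriod_eq_of_injective {α β : Type*} {f : α → β}
    {ga : α → α} {gb : β → β} (h : Semiconj f ga gb) (hf : Injective f) (x : α) :
    minimalPeriod gb (f x) = minimalPeriod ga x :=
  minimalPeriod_eq_minimalPeriod_iff.mpr fun n => by
    simp only [IsPeriodicPt, IsFixedPt, ← h.iterate_right n x, hf.eq_iff]

open Fin.CommRing in
theorem Fin.addOrderOf_one (n : ℕ) : addOrderOf (1 : Fin (n + 1)) = n + 1 :=
  CharP.eq _ (CharP.addOrderOf_one _) (Fin.charP _)

section FiringMemory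

variable {V : Type*} [Fintype V] (G : SimpleGraph V) (dt : V → ℕ) (y : V → Bool × ℕ) (i : V)

theorem conjNet_top_eq_true_iff (x : V → Bool) :
    conjNet (⊤ : SimpleGraph V) x i = true ↔ ∀ j, j ≠ i → x j = true := by
  simp [conjNet, ne_comm]

theorem fmStep_apply_of_conjNet_true (h : conjNet G (fun j => (y j).1) i = true)
    (hdt : 1 ≤ dt i) : fmStep G dt y i = (true, dt i) := by
  simp [fmStep, h, hdt]

theorem fmStep_apply_of_conjNet_false_of_two_le (h : conjNet G (fun j => (y j).1) i = false)
    (hy : 2 ≤ (y i).2) : fmStep G dt y i = (true, (y i).2 - 1) := by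
  simp [fmStep, h, show 1 ≤ (y i).2 - 1 by omega]

theorem fmStep_apply_of_conjNet_false_of_le_one (h : conjNet G (fun j => (y j).1) i = false)
    (hy : (y i).2 ≤ 1) : fmStep G dt y i = (false, 0) := by
  simp [fmStep, h, show (y i).2 - 1 = 0 by omega]

end FiringMemory

section Clock

variable (τ : ℕ)

def clockConfig (k : Fin (τ + 1)) : Fin (τ + 1) → Bool × ℕ :=
  fun j => if j = k then (false, 0) else (true, ((j - k : Fin (τ + 1)) : ℕ))

theorem clockConfig_injective : Injective (clockConfig τ) := by
  intro k l hkl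
  by_contra hne
  have := congrFun hkl k
  simp [clockConfig, hne] at this

theorem conjNet_top_clockConfig (k i : Fin (τ + 1)) :
    conjNet ⊤ (fun j => (clockConfig τ k j).1) i = decide (i = k) := by
  by_cases hik : i = k
  · subst hik
    simpa [conjNet_top_eq_true_iff, clockConfig] using fun j hj => by simp [hj]
  · have : ¬ conjNet ⊤ (fun j => (clockConfig τ k j).1) i = true := fun h => by
      simpa [clockConfig] using (conjNet_top_eq_true_iff i _).mp h k (Ne.symm hik)
    simpa [hik] using this

theorem clockConfig_semiconj (hτ : 0 < τ) :
    Semiconj (clockConfig τ) (1 + ·) (fmStep ⊤ fun _ => τ) := by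
  obtain ⟨n, rfl⟩ : ∃ n, τ = n + 1 := ⟨τ - 1, by omega⟩
  intro k
  funext i
  have hfire := conjNet_top_clockConfig (n + 1) k i
  by_cases hik : i = k
  · subst hik
    rw [fmStep_apply_of_conjNet_true _ _ _ _ (by simpa using hfire) (by simp)]
    simp [clockConfig, sub_add_cancel_right, Fin.coe_neg_one]
  have hfire' : conjNet ⊤ (fun j => (clockConfig (n + 1) k j).1) i = false := by
    simpa [hik] using hfire
  by_cases hik₁ : i = 1 + k
  · subst hik₁
    rw [fmStep_apply_of_conjNet_false_of_le_one _ _ _ _ hfire' (by simp [clockConfig, hik])]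
    simp [clockConfig]
  · have hdiff₀ : i - k ≠ 0 := sub_ne_zero.mpr hik
    have hdiff₁ : i - k ≠ 1 := fun h => hik₁ (by rw [← h, sub_add_cancel])
    have hval : 2 ≤ ((i - k : Fin (n + 2)) : ℕ) := by
      have h₀ : ((i - k : Fin (n + 2)) : ℕ) ≠ 0 := fun h => hdiff₀ (Fin.ext h)
      have h₁ : ((i - k : Fin (n + 2)) : ℕ) ≠ 1 := fun h => hdiff₁ (Fin.ext (by simpa using h))
      omega
    rw [fmStep_apply_of_conjNet_false_of_two_le _ _ _ _ hfire' (by simpa [clockConfig, hik])]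
    simp [clockConfig, hik, hik₁, sub_add_eq_sub_sub_swap, Fin.coe_sub_one, hdiff₀]

theorem minimalPeriod_clockConfig (hτ : 0 < τ) (k : Fin (τ + 1)) :
    minimalPeriod (fmStep ⊤ fun _ => τ) (clockConfig τ k) = τ + 1 := by
  have htranslate : Semiconj (· + k) (1 + ·) (1 + ·) := fun j => add_assoc 1 j k
  calc minimalPeriod (fmStep ⊤ fun _ => τ) (clockConfig τ k)
      = minimalPeriod (1 + ·) (0 + k) := by
        rw [(clockConfig_semiconj τ hτ).minimalPeriod_eq_of_injective (clockConfig_injective τ),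
          zero_add]
    _ = addOrderOf (1 : Fin (τ + 1)) :=
        htranslate.minimalPeriod_eq_of_injective (add_left_injective k) 0
    _ = τ + 1 := Fin.addOrderOf_one τ

end Clock

/-- the clock with parameter `τ ≥ 2` admits an attractor of
period `τ + 1`: the configuration whose node `i` is in delay-notation state
`i` is periodic with minimal period exactly `τ + 1`. -/
theorem clock_attractor (τ : ℕ) (hτ : 2 ≤ τ) :
    Function.IsPeriodicPt (fmStep (⊤ : SimpleGraph (Fin (τ + 1))) (fun _ => τ)) (τ + 1)
      (fun j : Fin (τ + 1) =>
        if (j : ℕ) = 0 then ((false, 0) : Bool × ℕ) else (true, (j : ℕ))) ∧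
    Function.minimalPeriod (fmStep (⊤ : SimpleGraph (Fin (τ + 1))) (fun _ => τ))
      (fun j : Fin (τ + 1) =>
        if (j : ℕ) = 0 then ((false, 0) : Bool × ℕ) else (true, (j : ℕ))) = τ + 1 := by
  have hconfig : (fun j : Fin (τ + 1) =>
      if (j : ℕ) = 0 then ((false, 0) : Bool × ℕ) else (true, (j : ℕ))) = clockConfig τ 0 := by
    funext j
    simp [clockConfig, Fin.val_eq_zero_iff]
  have hperiod := minimalPeriod_clockConfig τ (by omega) 0
  rw [hconfig]
  exact ⟨isPeriodicPt_iff_minimalPeriod_dvd.mpr hperiod.dvd, hperiod⟩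
end

section
/- For every integer p ≥ 3 there exists a conjunctive network with firing memory (namely one whose interaction graph is the complete graph K_p and whose maximum delay is dt_i = p − 1 at every node) that admits an attractor of period p, i.e. a configuration that is periodic with minimal period exactly p. -/
open Fin.CommRing

def myCfg (p : ℕ) [NeZero p] (k : Fin p) : Bool × ℕ := (decide (k ≠ 0), k.val)

lemma step_cfg (p : ℕ) (hp : 3 ≤ p) (t : Fin p) :
    haveI : NeZero p := ⟨by omega⟩
    fmStep (⊤ : SimpleGraph (Fin p)) (fun _ => p - 1) (fun i => myCfg p (i - t))
      = fun i => myCfg p (i - (t + 1)) := by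
  haveI : NeZero p := ⟨by omega⟩
  have hone : (1 : Fin p).val = 1 := by
    rw [Fin.val_one', Nat.mod_eq_of_lt (by omega)]
  funext i
  by_cases hit : i = t
  · subst hit
    have hf : conjNet (⊤ : SimpleGraph (Fin p)) (fun j => (myCfg p (j - i)).1) i = true := by
      simp only [conjNet, SimpleGraph.top_adj]
      rw [if_pos]
      intro j hj
      simp [myCfg, sub_eq_zero, Ne.symm hj]
    have h1 : 1 ≤ p - 1 := by omega
    have hval : ((i - (i + 1)) : Fin p).val = p - 1 := by
      have hm1 : (i - (i + 1) : Fin p) = -1 := by ring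
      rw [hm1]
      show (p - (1 : Fin p).val) % p = p - 1
      rw [hone, Nat.mod_eq_of_lt (by omega)]
    have hne : (i - (i + 1) : Fin p) ≠ 0 := by
      intro h
      rw [h] at hval; simp at hval; omega
    simp only [fmStep]
    rw [hf]
    simp [myCfg, h1]
    refine ⟨by omega, ?_⟩
    show p - 1 = (p - (1 : Fin p).val) % p
    rw [hone, Nat.mod_eq_of_lt (by omega)]
  · have hf : conjNet (⊤ : SimpleGraph (Fin p)) (fun j => (myCfg p (j - t)).1) i = false := by
      simp only [conjNet, SimpleGraph.top_adj]
      rw [if_neg]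
      intro h
      have := h t hit
      simp [myCfg] at this
    have hk : (i - t : Fin p) ≠ 0 := sub_ne_zero.mpr hit
    have hkv : 1 ≤ ((i - t : Fin p)).val := by
      rcases Nat.eq_zero_or_pos ((i - t : Fin p)).val with h | h
      · exact absurd (Fin.ext (by simp [h])) hk
      · exact h
    have hlt : ((i - t : Fin p)).val < p := (i - t).isLt
    have hval : ((i - (t + 1)) : Fin p).val = ((i - t : Fin p)).val - 1 := by
      have heq : (i - (t + 1) : Fin p) = (i - t) - 1 := by ring
      rw [heq, Fin.sub_def]
      show (p - (1 : Fin p).val + ((i - t : Fin p)).val) % p = _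
      rw [hone]
      have : p - 1 + ((i - t : Fin p)).val = (((i - t : Fin p)).val - 1) + p := by omega
      rw [this, Nat.add_mod_right, Nat.mod_eq_of_lt (by omega)]
    have hzero : ((i - (t + 1)) : Fin p) = 0 ↔ ((i - t : Fin p)).val - 1 = 0 := by
      rw [Fin.ext_iff, Fin.val_zero, hval]
    simp only [fmStep]
    rw [hf]
    simp only [Bool.false_eq_true, if_false, myCfg, Prod.mk.injEq]
    refine ⟨?_, hval.symm⟩
    by_cases h1 : 1 ≤ ((i - t : Fin p)).val - 1
    · have h2 : (i - (t + 1) : Fin p) ≠ 0 := by rw [Ne, hzero]; omega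
      simp [h1, h2]
    · have h2 : (i - (t + 1) : Fin p) = 0 := hzero.mpr (by omega)
      simp [h1, h2]

/-- for every `p ≥ 3` there is a conjunctive network with firing
memory — the one on the complete graph `K_p` with maximum delay `p - 1` at
every node — admitting an attractor of minimal period exactly `p`. -/
theorem attractor_of_period (p : ℕ) (hp : 3 ≤ p) :
    ∃ y : Fin p → Bool × ℕ,
      Function.IsPeriodicPt (fmStep (⊤ : SimpleGraph (Fin p)) (fun _ => p - 1)) p y ∧
      Function.minimalPeriod (fmStep (⊤ : SimpleGraph (Fin p)) (fun _ => p - 1)) y = p := by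
  haveI : NeZero p := ⟨by omega⟩
  set Φ := fmStep (⊤ : SimpleGraph (Fin p)) (fun _ => p - 1) with hΦ
  set y : Fin p → Bool × ℕ := fun i => myCfg p i with hy
  have hiter : ∀ t : ℕ, Φ^[t] y = fun i => myCfg p (i - (t : Fin p)) := by
    intro t
    induction t with
    | zero => simp [hy]
    | succ n ih =>
        rw [Function.iterate_succ_apply', ih, hΦ, step_cfg p hp (n : Fin p)]
        push_cast
        rfl
  have hper : Function.IsPeriodicPt Φ p y := by
    show Φ^[p] y = y
    rw [hiter p]
    simp [hy]
  have hne : ∀ t : ℕ, 0 < t → t < p → Φ^[t] y ≠ y := by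
    intro t ht htp h
    rw [hiter t] at h
    have h0 := congrArg (fun f => (f 0).2) h
    simp only [hy, myCfg] at h0
    have hval : ((0 - (t : Fin p)) : Fin p).val = p - t := by
      rw [zero_sub]
      show (p - ((t : Fin p)).val) % p = p - t
      rw [Fin.val_natCast, Nat.mod_eq_of_lt htp, Nat.mod_eq_of_lt (by omega)]
    rw [hval] at h0
    simp at h0
    omega
  refine ⟨y, hper, ?_⟩
  have hdvd := Function.IsPeriodicPt.minimalPeriod_dvd hper
  have hpos : 0 < Function.minimalPeriod Φ y :=
    hper.minimalPeriod_pos (by omega)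
  rcases Nat.lt_or_ge (Function.minimalPeriod Φ y) p with hlt | hge
  · exact absurd (Function.isPeriodicPt_minimalPeriod Φ y)
      (hne _ hpos hlt)
  · exact Nat.le_antisymm (Nat.le_of_dvd (by omega) hdvd) hge
end

section
/- Let τ ≥ 2. For every integer k ≥ 2 there exist a finite simple graph G and a configuration y of the conjunctive network with firing memory on G with uniform maximum delay dt_i = τ at every node i, such that y is periodic with minimal period exactly k·(τ + 1). -/
/-! On the clock ring `ZMod M × {true}`, each node joined to the `τ` nearest nodes on either side,
a wave with one silent node in every `τ + 1` consecutive ones moves one place per step: exactly the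
silent nodes see only active neighbours. The defect ring `ZMod M × {false}` is a cycle carrying a
single silent node; its node `i` also sees the clock nodes `i + 1, …, i + τ - 1`, so defect nodes
can fire only in step with the clock, and the defect travels along with the wave. One step of the
network is thus the rotation by one place, an automorphism of the graph, and the single defect
makes the orbit consist of exactly `M` configurations (`M` a multiple of `τ + 1`). -/

theorem Function.Semiconj.minimalPeriod_eq {α β : Type*} {fa : α → α} {fb : β → β} {g : α → β}
    (h : Function.Semiconj g fa fb) (hg : Function.Injective g) (x : α) :
    Function.minimalPeriod fb (g x) = Function.minimalPeriod fa x :=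
  Function.minimalPeriod_eq_minimalPeriod_iff.mpr fun n => by
    simp only [Function.IsPeriodicPt, Function.IsFixedPt, ← (h.iterate_right n).eq, hg.eq_iff]

section General

variable {V W : Type*} [Fintype V] [Fintype W]

theorem conjNet_eq_true_iff {G : SimpleGraph V} {x : V → Bool} {i : V} :
    conjNet G x i = true ↔ ∀ j, G.Adj i j → x j = true := by
  unfold conjNet
  split_ifs with h <;> simpa using h

theorem conjNet_comp_iso {G : SimpleGraph V} {H : SimpleGraph W} (e : G ≃g H) (x : W → Bool)
    (v : V) : conjNet G (x ∘ e) v = conjNet H x (e v) := by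
  rw [Bool.eq_iff_iff, conjNet_eq_true_iff, conjNet_eq_true_iff, e.surjective.forall]
  simp only [e.map_adj_iff, Function.comp_apply]

theorem fmStep_comp_iso {G : SimpleGraph V} {H : SimpleGraph W} (e : G ≃g H) (dt : W → ℕ) :
    Function.Semiconj (· ∘ e) (fmStep H dt) (fmStep G (dt ∘ e)) := fun y => by
  funext v
  simp only [fmStep, Function.comp_apply]
  rw [← conjNet_comp_iso e]
  rfl

theorem fmStep_apply_eq_ite (G : SimpleGraph V) (dt : V → ℕ) (y : V → Bool × ℕ) (i : V) :
    fmStep G dt y i = if conjNet G (fun j => (y j).1) i = true then (true, dt i)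
      else (decide (2 ≤ (y i).2), (y i).2 - 1) := by
  by_cases h : conjNet G (fun j => (y j).1) i = true
  · simp [fmStep, h]
  · simp only [fmStep, h, if_false, Bool.false_eq_true]
    exact Prod.ext (decide_eq_decide.mpr (by omega)) rfl

theorem exists_fin_minimalPeriod_fmStep_eq (G : SimpleGraph V) (dt : V → ℕ) (y : V → Bool × ℕ) :
    ∃ (G' : SimpleGraph (Fin (Fintype.card V))) (e : Fin (Fintype.card V) ≃ V),
      Function.minimalPeriod (fmStep G' (dt ∘ e)) (y ∘ e) =
        Function.minimalPeriod (fmStep G dt) y := by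
  let e := SimpleGraph.Iso.map (Fintype.equivFin V) G
  refine ⟨_, e.symm.toEquiv, (fmStep_comp_iso e.symm dt).minimalPeriod_eq ?_ y⟩
  exact e.symm.surjective.injective_comp_right

end General

namespace ClockWithDefect

variable {τ M : ℕ}

def phase (τ : ℕ) (i : ZMod M) : ℕ := i.val % (τ + 1)

theorem phase_le (i : ZMod M) : phase τ i ≤ τ :=
  Nat.lt_succ_iff.mp (Nat.mod_lt _ τ.succ_pos)

theorem phase_zero : phase τ (0 : ZMod M) = 0 := by
  simp [phase]

theorem phase_add_natCast [NeZero M] (hM : τ + 1 ∣ M) (i : ZMod M) {a : ℕ} (ha : a ≤ τ) :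
    phase τ (i + (a : ZMod M)) = phase τ i + a ∨
      phase τ (i + (a : ZMod M)) + (τ + 1) = phase τ i + a := by
  have hmod : phase τ (i + (a : ZMod M)) = (phase τ i + a) % (τ + 1) := by
    rw [phase, phase, ZMod.val_add, ZMod.val_natCast, Nat.mod_mod_of_dvd _ hM, Nat.add_mod,
      Nat.mod_mod_of_dvd _ hM, ← Nat.add_mod, Nat.mod_add_mod]
  have hi : phase τ i ≤ τ := phase_le i
  rcases Nat.lt_or_ge (phase τ i + a) (τ + 1) with hlt | hge
  · exact Or.inl (hmod.trans (Nat.mod_eq_of_lt hlt))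
  · right
    rw [hmod, Nat.mod_eq_sub_mod hge, Nat.mod_eq_of_lt (by omega)]
    omega

theorem phase_add_one [NeZero M] (hM : τ + 1 ∣ M) (hτ : 1 ≤ τ) (i : ZMod M) :
    phase τ (i + 1) = phase τ i + 1 ∨ phase τ (i + 1) + (τ + 1) = phase τ i + 1 := by
  simpa using phase_add_natCast hM i hτ

theorem phase_one [NeZero M] (hM : τ + 1 ∣ M) (hτ : 1 ≤ τ) : phase τ (1 : ZMod M) = 1 := by
  have := phase_add_one hM hτ (0 : ZMod M)
  rw [zero_add, phase_zero] at this
  omega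

theorem one_ne_zero_of_dvd [NeZero M] (hM : τ + 1 ∣ M) (hτ : 1 ≤ τ) : (1 : ZMod M) ≠ 0 :=
  fun h10 => by simpa [h10, phase_zero] using phase_one hM hτ

def Rel (τ M : ℕ) : ZMod M × Bool → ZMod M × Bool → Prop
  | (i, true), (j, true) => ∃ a : ℕ, 1 ≤ a ∧ a ≤ τ ∧ j = i + a
  | (i, false), (j, false) => j = i + 1
  | (i, false), (j, true) => ∃ a : ℕ, 1 ≤ a ∧ a ≤ τ - 1 ∧ j = i + a
  | (_, true), (_, false) => False

def graph (τ M : ℕ) : SimpleGraph (ZMod M × Bool) := SimpleGraph.fromRel (Rel τ M)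

/-- `phase τ i` counts the steps since clock node `i` last fired. -/
def wave (τ : ℕ) : ZMod M × Bool → Bool × ℕ
  | (i, true) => (decide (phase τ i ≠ τ), τ - phase τ i)
  | (i, false) => (decide (i ≠ 0), if i = 0 then 0 else min τ (τ + 1 - phase τ i))

def rotate (τ : ℕ) (a : ZMod M) : graph τ M ≃g graph τ M where
  toEquiv := (Equiv.addRight a).prodCongr (Equiv.refl Bool)
  map_rel_iff' := by
    rintro ⟨i, b⟩ ⟨j, c⟩
    cases b <;> cases c <;> simp [graph, Rel, add_right_comm _ a]

theorem wave_comp_rotate_injective :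
    Function.Injective fun a : ZMod M => wave τ ∘ rotate τ a := by
  intro a b hab
  simpa [rotate, wave, neg_add_eq_zero] using congrArg Prod.fst (congrFun hab (-a, false))

theorem graph_adj_iff {v w : ZMod M × Bool} :
    (graph τ M).Adj v w ↔ v ≠ w ∧ (Rel τ M v w ∨ Rel τ M w v) :=
  SimpleGraph.fromRel_adj _ _ _

theorem wave_clock (i : ZMod M) : wave τ (i, true) = (decide (phase τ i ≠ τ), τ - phase τ i) :=
  rfl

theorem wave_defect_zero : wave τ ((0 : ZMod M), false) = (false, 0) := by
  simp [wave]

theorem wave_defect_of_ne_zero {i : ZMod M} (hi : i ≠ 0) :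
    wave τ (i, false) = (true, min τ (τ + 1 - phase τ i)) := by
  simp [wave, hi]

theorem wave_clock_fst {i : ZMod M} : (wave τ (i, true)).1 = true ↔ phase τ i ≠ τ := by
  simp [wave]

theorem wave_defect_fst {i : ZMod M} : (wave τ (i, false)).1 = true ↔ i ≠ 0 := by
  simp [wave]

variable [NeZero M]

theorem add_natCast_ne_self (hM : τ + 1 ∣ M) (i : ZMod M) {a : ℕ} (ha₀ : 1 ≤ a) (ha : a ≤ τ) :
    i + a ≠ i := fun heq => by
  have := phase_add_natCast hM i ha
  rw [heq] at this
  omega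

theorem phase_add_natCast_sub_phase (hM : τ + 1 ∣ M) (i : ZMod M) :
    phase τ (i + ((τ - phase τ i : ℕ) : ZMod M)) = τ := by
  have hi : phase τ i ≤ τ := phase_le i
  rcases phase_add_natCast hM i (Nat.sub_le τ (phase τ i)) with h | h <;> omega

theorem conjNet_wave_clock_iff (hM : τ + 1 ∣ M) (i : ZMod M) :
    conjNet (graph τ M) (fun v => (wave τ v).1) (i, true) = true ↔ phase τ i = τ := by
  have hi : phase τ i ≤ τ := phase_le i
  rw [conjNet_eq_true_iff]
  constructor
  · intro H
    by_contra hne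
    refine wave_clock_fst.mp (H (i + ((τ - phase τ i : ℕ) : ZMod M), true) ?_)
      (phase_add_natCast_sub_phase hM i)
    refine graph_adj_iff.mpr ⟨?_, Or.inl ⟨τ - phase τ i, by omega, Nat.sub_le _ _, rfl⟩⟩
    simpa [eq_comm] using add_natCast_ne_self hM i (a := τ - phase τ i) (by omega) (by omega)
  · rintro hs ⟨j, c⟩ hadj
    obtain ⟨-, hr | hr⟩ := graph_adj_iff.mp hadj <;> cases c <;> simp only [Rel] at hr <;>
      obtain ⟨a, ha₀, ha, rfl⟩ := hr
    · have := phase_add_natCast hM i ha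
      rw [wave_clock_fst]
      omega
    · rw [wave_defect_fst]
      rintro rfl
      have := phase_add_natCast hM (0 : ZMod M) (by omega : a ≤ τ)
      rw [phase_zero] at this
      omega
    · have := phase_add_natCast hM j ha
      have : phase τ j ≤ τ := phase_le j
      rw [wave_clock_fst]
      omega

theorem conjNet_wave_defect_iff (hM : τ + 1 ∣ M) (hτ : 2 ≤ τ) (i : ZMod M) :
    conjNet (graph τ M) (fun v => (wave τ v).1) (i, false) = true ↔
      i + 1 ≠ 0 ∧ i ≠ 1 ∧ (phase τ i = 0 ∨ phase τ i = τ) := by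
  have hi : phase τ i ≤ τ := phase_le i
  rw [conjNet_eq_true_iff]
  constructor
  · intro H
    refine ⟨?_, ?_, ?_⟩
    · refine wave_defect_fst.mp (H (i + 1, false) (graph_adj_iff.mpr ⟨?_, Or.inl rfl⟩))
      simpa [eq_comm] using add_natCast_ne_self hM i (a := 1) le_rfl (by omega)
    · have := wave_defect_fst.mp <| H (i - 1, false) <| graph_adj_iff.mpr
        ⟨by simpa using add_natCast_ne_self hM (i - 1) (a := 1) le_rfl (by omega),
          Or.inr (sub_add_cancel i 1).symm⟩
      rwa [Ne, sub_eq_zero] at this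
    · by_contra hne
      refine wave_clock_fst.mp (H (i + ((τ - phase τ i : ℕ) : ZMod M), true) ?_)
        (phase_add_natCast_sub_phase hM i)
      exact graph_adj_iff.mpr ⟨by simp, Or.inl ⟨τ - phase τ i, by omega, by omega, rfl⟩⟩
  · rintro ⟨hsucc, hpred, hs⟩ ⟨j, c⟩ hadj
    obtain ⟨-, hr | hr⟩ := graph_adj_iff.mp hadj <;> cases c <;> simp only [Rel] at hr
    · rwa [hr, wave_defect_fst]
    · obtain ⟨a, ha₀, ha, rfl⟩ := hr
      have := phase_add_natCast hM i (by omega : a ≤ τ)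
      rw [wave_clock_fst]
      omega
    · rw [wave_defect_fst]
      rintro rfl
      rw [hr, zero_add] at hpred
      exact hpred rfl

theorem fmStep_wave_clock (hM : τ + 1 ∣ M) (hτ : 1 ≤ τ) (i : ZMod M) :
    fmStep (graph τ M) (fun _ => τ) (wave τ) (i, true) = wave τ (i + 1, true) := by
  have hi : phase τ i ≤ τ := phase_le i
  have hi' : phase τ (i + 1) ≤ τ := phase_le (i + 1)
  have hstep := phase_add_one hM hτ i
  rw [fmStep_apply_eq_ite, wave_clock, wave_clock]
  simp only [conjNet_wave_clock_iff hM]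
  split_ifs with hfire <;> rw [Prod.mk.injEq]
  · exact ⟨(decide_eq_true (by omega)).symm, by omega⟩
  · exact ⟨decide_eq_decide.mpr (by omega), by omega⟩

theorem fmStep_wave_defect (hM : τ + 1 ∣ M) (hτ : 2 ≤ τ) (i : ZMod M) :
    fmStep (graph τ M) (fun _ => τ) (wave τ) (i, false) = wave τ (i + 1, false) := by
  have hi : phase τ i ≤ τ := phase_le i
  have hi' : phase τ (i + 1) ≤ τ := phase_le (i + 1)
  have hstep := phase_add_one hM (by omega) i
  have hp1 := phase_one hM (by omega : 1 ≤ τ) (M := M)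
  have h10 := one_ne_zero_of_dvd hM (by omega : 1 ≤ τ)
  rw [fmStep_apply_eq_ite]
  simp only [conjNet_wave_defect_iff hM hτ]
  by_cases h0 : i = 0
  · subst h0
    rw [if_pos ⟨by rwa [zero_add], h10.symm, Or.inl phase_zero⟩, zero_add,
      wave_defect_of_ne_zero h10, hp1, Prod.mk.injEq]
    exact ⟨rfl, by omega⟩
  rw [wave_defect_of_ne_zero h0]
  by_cases hlast : i + 1 = 0
  · rw [hlast, phase_zero] at hstep
    rw [if_neg (fun h => h.1 hlast), hlast, wave_defect_zero, Prod.mk.injEq]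
    exact ⟨decide_eq_false (by omega), by omega⟩
  rw [wave_defect_of_ne_zero hlast]
  by_cases h1 : i = 1
  · subst h1
    rw [hp1] at hstep
    rw [if_neg (fun h => h.2.1 rfl), Prod.mk.injEq]
    exact ⟨decide_eq_true (by omega), by omega⟩
  by_cases hfire : phase τ i = 0 ∨ phase τ i = τ
  · rw [if_pos ⟨hlast, h1, hfire⟩, Prod.mk.injEq]
    exact ⟨rfl, by omega⟩
  · rw [if_neg (fun h => hfire h.2.2), Prod.mk.injEq]
    exact ⟨decide_eq_true (by omega), by omega⟩

theorem fmStep_wave (hM : τ + 1 ∣ M) (hτ : 2 ≤ τ) :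
    fmStep (graph τ M) (fun _ => τ) (wave τ) = fun v => wave τ (v.1 + 1, v.2) := by
  funext ⟨i, b⟩
  cases b
  exacts [fmStep_wave_defect hM hτ i, fmStep_wave_clock hM (by omega) i]

theorem fmStep_wave_comp_rotate (hM : τ + 1 ∣ M) (hτ : 2 ≤ τ) (a : ZMod M) :
    fmStep (graph τ M) (fun _ => τ) (wave τ ∘ rotate τ a) = wave τ ∘ rotate τ (1 + a) :=
  calc fmStep (graph τ M) (fun _ => τ) (wave τ ∘ rotate τ a)
      _ = fmStep (graph τ M) (fun _ => τ) (wave τ) ∘ rotate τ a :=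
        ((fmStep_comp_iso (rotate τ a) (fun _ => τ)).eq (wave τ)).symm
      _ = wave τ ∘ rotate τ (1 + a) := by
        rw [fmStep_wave hM hτ]
        funext v
        change wave τ (v.1 + a + 1, v.2) = wave τ (v.1 + (1 + a), v.2)
        rw [add_assoc, add_comm a]

theorem minimalPeriod_fmStep_wave (hM : τ + 1 ∣ M) (hτ : 2 ≤ τ) :
    Function.minimalPeriod (fmStep (graph τ M) (fun _ => τ)) (wave τ) = M := by
  have hsemi : Function.Semiconj (fun a : ZMod M => wave τ ∘ rotate τ a) (1 + ·)
      (fmStep (graph τ M) (fun _ => τ)) := fun a =>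
    (fmStep_wave_comp_rotate hM hτ a).symm
  have := hsemi.minimalPeriod_eq wave_comp_rotate_injective 0
  simpa [rotate] using this.trans (ZMod.addOrderOf_one M)

end ClockWithDefect

/-- for every `τ ≥ 2` and every `k ≥ 2` there is a conjunctive
network with firing memory with uniform maximum delay `τ` admitting an
attractor of minimal period exactly `k (τ + 1)`. -/
theorem uniform_delay_period_multiple (τ : ℕ) (hτ : 2 ≤ τ) (k : ℕ) (hk : 2 ≤ k) :
    ∃ (n : ℕ) (G : SimpleGraph (Fin n)) (y : Fin n → Bool × ℕ),
      Function.IsPeriodicPt (fmStep G (fun _ => τ)) (k * (τ + 1)) y ∧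
      Function.minimalPeriod (fmStep G (fun _ => τ)) y = k * (τ + 1) := by
  have : NeZero (k * (τ + 1)) := ⟨by positivity⟩
  obtain ⟨G, e, he⟩ := exists_fin_minimalPeriod_fmStep_eq
    (ClockWithDefect.graph τ (k * (τ + 1))) (fun _ => τ) (ClockWithDefect.wave τ)
  rw [ClockWithDefect.minimalPeriod_fmStep_wave (dvd_mul_left _ _) hτ] at he
  exact ⟨_, G, _, Function.isPeriodicPt_iff_minimalPeriod_dvd.mpr (dvd_of_eq he), he⟩
end

section
/- Let Φ be the conjunctive network with firing memory associated to a finite simple (non-directed) graph G and maximum delays dt, and let y be a configuration in which every node whose Boolean state is 0 has delay 0. If node i satisfies x_i = 0 and F(x)_i = 0 (where F is the conjunctive network on G and x is the Boolean part of y), then for every t ≥ 1 the Boolean state of node i in Φ^t(y) is 0. -/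
/-!
Two adjacent nodes that are both in state `(0, 0)` each see a `0` in their neighbourhood, so
neither fires nor has delay left to count down: the pair stays in `(0, 0)` forever. The node
`i` and a neighbour `j` witnessing `F(x)ᵢ = 0` form such a pair already in `y`.
-/

section FiringMemory

variable {V : Type*} [Fintype V] (G : SimpleGraph V) (dt : V → ℕ)

theorem conjNet_eq_false_iff (x : V → Bool) (i : V) :
    conjNet G x i = false ↔ ∃ j, G.Adj i j ∧ x j = false := by
  simp [conjNet]

theorem fmStep_eq_off_of_conjNet_eq_false {y : V → Bool × ℕ} {i : V}
    (hF : conjNet G (fun j => (y j).1) i = false) (hd : (y i).2 = 0) :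
    fmStep G dt y i = (false, 0) := by
  simp [fmStep, hF, hd]

theorem fmStep_eq_off_of_adj_off {y : V → Bool × ℕ} {i j : V} (hij : G.Adj i j)
    (hi : y i = (false, 0)) (hj : y j = (false, 0)) :
    fmStep G dt y i = (false, 0) :=
  fmStep_eq_off_of_conjNet_eq_false G dt
    ((conjNet_eq_false_iff G _ i).2 ⟨j, hij, by simp [hj]⟩) (by simp [hi])

theorem iterate_fmStep_eq_off_of_adj_off {y : V → Bool × ℕ} {i j : V} (hij : G.Adj i j)
    (hi : y i = (false, 0)) (hj : y j = (false, 0)) (t : ℕ) :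
    (fmStep G dt)^[t] y i = (false, 0) ∧ (fmStep G dt)^[t] y j = (false, 0) := by
  induction t with
  | zero => exact ⟨hi, hj⟩
  | succ t ih =>
    rw [Function.iterate_succ_apply']
    exact ⟨fmStep_eq_off_of_adj_off G dt hij ih.1 ih.2,
      fmStep_eq_off_of_adj_off G dt hij.symm ih.2 ih.1⟩

end FiringMemory

theorem zero_stays_zero_general {n : ℕ} (G : SimpleGraph (Fin n)) (dt : Fin n → ℕ)
    (y : Fin n → Bool × ℕ)
    (hy : ∀ i, (y i).1 = false → (y i).2 = 0)
    (i : Fin n) (hx : (y i).1 = false)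
    (hF : conjNet G (fun j => (y j).1) i = false) :
    ∀ t : ℕ, 1 ≤ t → (((fmStep G dt)^[t] y) i).1 = false := by
  obtain ⟨j, hij, hxj⟩ := (conjNet_eq_false_iff G _ i).1 hF
  have off : ∀ k, (y k).1 = false → y k = (false, 0) := fun k hk => Prod.ext hk (hy k hk)
  intro t _
  rw [(iterate_fmStep_eq_off_of_adj_off G dt hij (off i hx) (off j hxj) t).1]

/-- in a conjunctive network with firing memory, if in a
configuration every node with Boolean state `0` has delay `0`, and node `i`
satisfies `xᵢ = 0` and `F(x)ᵢ = 0`, then the Boolean state of node `i` stays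
`0` forever (for every `t ≥ 1`). -/
theorem zero_stays_zero {n : ℕ} (G : SimpleGraph (Fin n)) (dt : Fin n → ℕ)
    (hdt : ∀ i, 1 ≤ dt i) (y : Fin n → Bool × ℕ)
    (hy : ∀ i, (y i).1 = false → (y i).2 = 0)
    (i : Fin n) (hx : (y i).1 = false)
    (hF : conjNet G (fun j => (y j).1) i = false) :
    ∀ t : ℕ, 1 ≤ t → (((fmStep G dt)^[t] y) i).1 = false :=
  zero_stays_zero_general G dt y hy i hx hF
end

section
/- Let Φ be the conjunctive network with firing memory associated to a connected finite simple (non-directed) graph G and maximum delays dt, and let y be a configuration in which every node whose Boolean state is 0 has delay 0. If there exist two adjacent nodes of G whose Boolean states in y are both 0, then the dynamics converges to the all-zero fixed point: there exists T ≥ 0 such that for all t ≥ T, every node of Φ^t(y) is in the pair state (0, 0). -/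
/-!
A node with a neighbour in Boolean state `0` does not fire, so its delay just counts down, and
once the delay is `0` it is itself in state `(0, 0)`. Two adjacent nodes in state `(0, 0)` thus
stay there forever, and by this countdown the set of nodes that are eventually permanently
`(0, 0)` is closed under adjacency; on a connected graph it is therefore everything.
-/

open Filter

section

variable {V : Type*} [Fintype V] (G : SimpleGraph V) (dt : V → ℕ)

theorem fmStep_of_adj_false (x : V → Bool × ℕ) {v w : V} (hvw : G.Adj v w)
    (hw : (x w).1 = false) :
    fmStep G dt x v = (decide (1 ≤ (x v).2 - 1), (x v).2 - 1) := by
  have hoff : conjNet G (fun j => (x j).1) v = false := by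
    simp only [conjNet, ite_eq_right_iff, Bool.true_eq_false, imp_false, not_forall]
    exact ⟨w, hvw, by simp [hw]⟩
  simp [fmStep, hoff]

theorem fmStep_eq_zero_of_adj (x : V → Bool × ℕ) {v w : V} (hvw : G.Adj v w)
    (hv : x v = (false, 0)) (hw : (x w).1 = false) :
    fmStep G dt x v = (false, 0) := by
  rw [fmStep_of_adj_false G dt x hvw hw, hv]
  rfl

theorem iterate_fmStep_eq_zero_of_adj (y : V → Bool × ℕ) {v w : V} (hvw : G.Adj v w)
    (hv : y v = (false, 0)) (hw : y w = (false, 0)) (t : ℕ) :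
    (fmStep G dt)^[t] y v = (false, 0) ∧ (fmStep G dt)^[t] y w = (false, 0) := by
  induction t with
  | zero => exact ⟨hv, hw⟩
  | succ t ih =>
    rw [Function.iterate_succ_apply']
    exact ⟨fmStep_eq_zero_of_adj G dt _ hvw ih.1 (by rw [ih.2]),
      fmStep_eq_zero_of_adj G dt _ hvw.symm ih.2 (by rw [ih.1])⟩

theorem eventually_iterate_fmStep_eq_zero_of_adj (y : V → Bool × ℕ) {v w : V}
    (hvw : G.Adj v w) (hw : ∀ᶠ t in atTop, (fmStep G dt)^[t] y w = (false, 0)) :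
    ∀ᶠ t in atTop, (fmStep G dt)^[t] y v = (false, 0) := by
  obtain ⟨T, hT⟩ := eventually_atTop.1 hw
  have hoff : ∀ t, T ≤ t → ((fmStep G dt)^[t] y w).1 = false := fun t ht => by rw [hT t ht]
  set D := ((fmStep G dt)^[T] y v).2
  have countdown : ∀ s, ((fmStep G dt)^[T + s] y v).2 = D - s := by
    intro s
    induction s with
    | zero => rfl
    | succ s ih =>
      rw [← add_assoc, Function.iterate_succ_apply',
        fmStep_of_adj_false G dt _ hvw (hoff _ (Nat.le_add_right T s)), ih]
      omega
  refine eventually_atTop.2 ⟨T + D + 1, fun t ht => ?_⟩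
  obtain ⟨s, rfl⟩ : ∃ s, t = T + (D + s) + 1 := ⟨t - (T + D + 1), by omega⟩
  rw [Function.iterate_succ_apply',
    fmStep_of_adj_false G dt _ hvw (hoff _ (Nat.le_add_right T _)), countdown,
    Nat.sub_self_add]
  rfl

theorem eventually_iterate_fmStep_eq_zero_of_reachable (y : V → Bool × ℕ) {v w : V}
    (hvw : G.Reachable v w) (hv : ∀ᶠ t in atTop, (fmStep G dt)^[t] y v = (false, 0)) :
    ∀ᶠ t in atTop, (fmStep G dt)^[t] y w = (false, 0) := by
  rw [SimpleGraph.reachable_iff_reflTransGen] at hvw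
  induction hvw with
  | refl => exact hv
  | tail _ hab ih => exact eventually_iterate_fmStep_eq_zero_of_adj G dt y hab.symm ih

end

theorem adjacent_zeros_converge_general {n : ℕ} (G : SimpleGraph (Fin n)) (hG : G.Connected)
    (dt : Fin n → ℕ) (y : Fin n → Bool × ℕ)
    (hy : ∀ i, (y i).1 = false → (y i).2 = 0)
    (i j : Fin n) (hij : G.Adj i j)
    (hxi : (y i).1 = false) (hxj : (y j).1 = false) :
    ∃ T : ℕ, ∀ t : ℕ, T ≤ t → ∀ v : Fin n,
      ((fmStep G dt)^[t] y) v = ((false, 0) : Bool × ℕ) := by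
  have hi : ∀ᶠ t in atTop, (fmStep G dt)^[t] y i = (false, 0) :=
    Eventually.of_forall fun t => (iterate_fmStep_eq_zero_of_adj G dt y hij
      (Prod.ext hxi (hy i hxi)) (Prod.ext hxj (hy j hxj)) t).1
  have hall : ∀ᶠ t in atTop, ∀ v, (fmStep G dt)^[t] y v = (false, 0) :=
    eventually_all.2 fun v =>
      eventually_iterate_fmStep_eq_zero_of_reachable G dt y (hG.preconnected i v) hi
  exact eventually_atTop.1 hall

/-- in a conjunctive network with firing memory on a connected
graph, if in a configuration every node with Boolean state `0` has delay `0`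
and two adjacent nodes are both in Boolean state `0`, then the dynamics
converges to the all-zero fixed point. -/
theorem adjacent_zeros_converge {n : ℕ} (G : SimpleGraph (Fin n)) (hG : G.Connected)
    (dt : Fin n → ℕ) (hdt : ∀ i, 1 ≤ dt i) (y : Fin n → Bool × ℕ)
    (hy : ∀ i, (y i).1 = false → (y i).2 = 0)
    (i j : Fin n) (hij : G.Adj i j)
    (hxi : (y i).1 = false) (hxj : (y j).1 = false) :
    ∃ T : ℕ, ∀ t : ℕ, T ≤ t → ∀ v : Fin n,
      ((fmStep G dt)^[t] y) v = ((false, 0) : Bool × ℕ) :=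
  adjacent_zeros_converge_general G hG dt y hy i j hij hxi hxj
end
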